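/- arXiv:1609.08076 — 2 statements merged into one kernel-verified Lean document; each statement's English description precedes it below -/
import Mathlib

section
/- Let H₀ be a Hermitian n×n complex matrix with spectral projections P_E onto its eigenspaces, and let B be an n×n complex matrix whose block-diagonal part vanishes, i.e., P_E B P_E = 0 for every eigenvalue E of H₀. Then for every η > 0 the integral ∫₀^∞ e^{−ητ} e^{iH₀τ} B e^{−iH₀τ} dτ converges absolutely, the limit Y = i lim_{η→0⁺} ∫₀^∞ e^{−ητ} e^{iH₀τ} B e^{−iH₀τ} dτ exists, and Y satisfies [H₀, Y] = −B. -/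
/-!
Diagonalise `H₀` in an orthonormal eigenbasis `bᵢ` with eigenvalues `μᵢ`. The rank-one operators
`Tᵢⱼ = |bᵢ⟩⟨bⱼ|` satisfy `H₀ Tᵢⱼ = μᵢ Tᵢⱼ` and `Tᵢⱼ H₀ = μⱼ Tᵢⱼ`, hence
`e^{iτH₀} Tᵢⱼ e^{-iτH₀} = e^{iτ(μᵢ-μⱼ)} Tᵢⱼ`. Expanding `B = ∑ βᵢⱼ Tᵢⱼ`, the regularised integral
is `∑ βᵢⱼ / (η - i(μᵢ-μⱼ)) Tᵢⱼ`. Since `βᵢⱼ = 0` whenever `μᵢ = μⱼ`, every term has a limit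
as `η → 0⁺`, giving `Y = -∑ βᵢⱼ / (μᵢ-μⱼ) Tᵢⱼ`, and `[H₀, Y] = -B` holds term by term.
-/

open MeasureTheory Complex Filter Topology InnerProductSpace

theorem integrableOn_exp_neg_mul_add_I_mul_Ioi {η : ℝ} (hη : 0 < η) (c : ℝ) :
    IntegrableOn (fun τ : ℝ => cexp ((-η + c * I) * τ)) (Set.Ioi 0) :=
  integrableOn_exp_mul_complex_Ioi (by simpa using hη) 0

theorem integral_exp_neg_mul_add_I_mul_Ioi {η : ℝ} (hη : 0 < η) (c : ℝ) :
    ∫ τ in Set.Ioi (0 : ℝ), cexp ((-η + c * I) * τ) = ((η : ℂ) - c * I)⁻¹ := by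
  rw [integral_exp_mul_complex_Ioi (by simpa using hη), ofReal_zero, mul_zero, Complex.exp_zero,
    neg_div, one_div, ← inv_neg, neg_add, neg_neg, sub_eq_add_neg]

/-- At `c = 0` the limit is the junk value `-(β / 0) = 0`, which is correct because `β = 0`. -/
theorem tendsto_I_mul_mul_inv_sub_I_mul {β : ℂ} {c : ℝ} (hβ : c = 0 → β = 0) :
    Tendsto (fun η : ℝ => I * (β * ((η : ℂ) - c * I)⁻¹)) (𝓝[>] 0) (𝓝 (-(β / c))) := by
  rcases eq_or_ne c 0 with hc | hc
  · simp [hβ hc]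
  have hcI : ((0 : ℝ) : ℂ) - c * I ≠ 0 := by simp [hc]
  have hcont : ContinuousAt (fun η : ℝ => I * (β * ((η : ℂ) - c * I)⁻¹)) 0 :=
    (continuousAt_const.mul (continuousAt_const.mul
      ((continuous_ofReal.continuousAt.sub continuousAt_const).inv₀ hcI)))
  have hval : I * (β * (((0 : ℝ) : ℂ) - c * I)⁻¹) = -(β / c) := by
    rw [ofReal_zero, zero_sub, inv_neg, mul_inv, inv_I]
    ring_nf
    rw [I_sq]
    ring
  exact hval ▸ hcont.tendsto.mono_left nhdsWithin_le_nhds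

theorem mul_sub_mul_sum_neg_div_smul_eq_neg {A ι : Type*} [Ring A] [Algebra ℂ A]
    [Fintype ι] {h X : A} {T : ι → A} {l r : ι → ℝ} {β : ι → ℂ}
    (hl : ∀ p, h * T p = (l p : ℂ) • T p) (hr : ∀ p, T p * h = (r p : ℂ) • T p)
    (hX : X = ∑ p, β p • T p) (hβ : ∀ p, l p = r p → β p = 0) :
    h * (∑ p, (-(β p / (l p - r p : ℝ))) • T p) -
      (∑ p, (-(β p / (l p - r p : ℝ))) • T p) * h = -X := by
  rw [hX, Finset.mul_sum, Finset.sum_mul, ← Finset.sum_sub_distrib, ← Finset.sum_neg_distrib]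
  refine Finset.sum_congr rfl fun p _ => ?_
  rw [mul_smul_comm, smul_mul_assoc, hl, hr, smul_smul, smul_smul, ← sub_smul, ← neg_smul,
    ← mul_sub]
  rcases eq_or_ne (l p) (r p) with hlr | hlr
  · simp [hβ p hlr]
  · have : ((l p - r p : ℝ) : ℂ) ≠ 0 := ofReal_ne_zero.mpr (sub_ne_zero.mpr hlr)
    push_cast at this ⊢
    field_simp

section BanachAlgebra

variable {A : Type*} [NormedRing A] [NormedAlgebra ℂ A] [CompleteSpace A]

theorem NormedSpace.exp_mul_of_mul_eq_smul {a t : A} {c : ℂ} (h : a * t = c • t) :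
    NormedSpace.exp a * t = cexp c • t := by
  have hpow : ∀ k : ℕ, a ^ k * t = c ^ k • t := by
    intro k
    induction k with
    | zero => simp
    | succ k ih => rw [pow_succ', mul_assoc, ih, mul_smul_comm, h, smul_smul, pow_succ]
  have hleft := (NormedSpace.exp_series_hasSum_exp' (𝕂 := ℂ) a).mul_right t
  have hright := (NormedSpace.exp_series_hasSum_exp' (𝕂 := ℂ) c).smul_const t
  simp only [smul_mul_assoc, hpow, smul_smul, smul_eq_mul] at hleft hright
  rw [Complex.exp_eq_exp_ℂ]
  exact hleft.unique hright

theorem NormedSpace.mul_exp_of_mul_eq_smul {a t : A} {c : ℂ} (h : t * a = c • t) :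
    t * NormedSpace.exp a = cexp c • t := by
  have hop : MulOpposite.op a * MulOpposite.op t = c • MulOpposite.op t := by
    rw [← MulOpposite.op_mul, h, MulOpposite.op_smul]
  have := NormedSpace.exp_mul_of_mul_eq_smul hop
  rw [NormedSpace.exp_op, ← MulOpposite.op_mul, ← MulOpposite.op_smul] at this
  exact MulOpposite.op_injective this

theorem NormedSpace.exp_smul_mul_mul_exp_neg_smul {h t : A} {l r : ℂ} (hl : h * t = l • t)
    (hr : t * h = r • t) (z : ℂ) :
    NormedSpace.exp (z • h) * t * NormedSpace.exp (-(z • h)) = cexp (z * (l - r)) • t := by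
  rw [NormedSpace.exp_mul_of_mul_eq_smul (c := z * l) (by rw [smul_mul_assoc, hl, smul_smul]),
    smul_mul_assoc, NormedSpace.mul_exp_of_mul_eq_smul (c := -(z * r))
      (by rw [mul_neg, mul_smul_comm, hr, smul_smul, neg_smul]), smul_smul, ← Complex.exp_add,
    mul_sub, sub_eq_add_neg]

noncomputable def dampedConj (h X : A) (η τ : ℝ) : A :=
  Real.exp (-η * τ) •
    (NormedSpace.exp ((I * τ) • h) * X * NormedSpace.exp (-((I * τ) • h)))

variable {ι : Type*} [Fintype ι] {h X : A} {T : ι → A} {l r : ι → ℝ} {β : ι → ℂ}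

theorem dampedConj_eq_sum (hl : ∀ p, h * T p = (l p : ℂ) • T p)
    (hr : ∀ p, T p * h = (r p : ℂ) • T p) (hX : X = ∑ p, β p • T p) (η τ : ℝ) :
    dampedConj h X η τ = ∑ p, (β p * cexp ((-η + (l p - r p : ℝ) * I) * τ)) • T p := by
  rw [dampedConj, hX, Finset.mul_sum, Finset.sum_mul, Finset.smul_sum]
  refine Finset.sum_congr rfl fun p _ => ?_
  rw [mul_smul_comm, smul_mul_assoc, NormedSpace.exp_smul_mul_mul_exp_neg_smul (hl p) (hr p),
    smul_smul, ← Complex.coe_smul, smul_smul, ofReal_exp, mul_left_comm,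
    ← Complex.exp_add]
  congr 3
  push_cast
  ring

theorem integrableOn_dampedConj (hl : ∀ p, h * T p = (l p : ℂ) • T p)
    (hr : ∀ p, T p * h = (r p : ℂ) • T p) (hX : X = ∑ p, β p • T p) {η : ℝ}
    (hη : 0 < η) :
    IntegrableOn (dampedConj h X η) (Set.Ioi 0) := by
  rw [funext (dampedConj_eq_sum hl hr hX η)]
  exact integrable_finsetSum _ fun p _ =>
    ((integrableOn_exp_neg_mul_add_I_mul_Ioi hη _).const_mul (β p)).smul_const (T p)

theorem integral_dampedConj (hl : ∀ p, h * T p = (l p : ℂ) • T p)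
    (hr : ∀ p, T p * h = (r p : ℂ) • T p) (hX : X = ∑ p, β p • T p) {η : ℝ}
    (hη : 0 < η) :
    ∫ τ in Set.Ioi 0, dampedConj h X η τ =
      ∑ p, (β p * ((η : ℂ) - (l p - r p : ℝ) * I)⁻¹) • T p := by
  simp_rw [dampedConj_eq_sum hl hr hX η]
  rw [integral_finsetSum _ fun p _ =>
    ((integrableOn_exp_neg_mul_add_I_mul_Ioi hη _).const_mul (β p)).smul_const (T p)]
  refine Finset.sum_congr rfl fun p _ => ?_
  rw [integral_smul_const, integral_const_mul, integral_exp_neg_mul_add_I_mul_Ioi hη]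

theorem tendsto_I_smul_integral_dampedConj (hl : ∀ p, h * T p = (l p : ℂ) • T p)
    (hr : ∀ p, T p * h = (r p : ℂ) • T p) (hX : X = ∑ p, β p • T p)
    (hβ : ∀ p, l p = r p → β p = 0) :
    Tendsto (fun η : ℝ => I • ∫ τ in Set.Ioi 0, dampedConj h X η τ) (𝓝[>] 0)
      (𝓝 (∑ p, (-(β p / (l p - r p : ℝ))) • T p)) := by
  have hlim := tendsto_finsetSum Finset.univ fun p _ =>
    (tendsto_I_mul_mul_inv_sub_I_mul (β := β p) (c := l p - r p)
      fun hc => hβ p (sub_eq_zero.mp hc)).smul_const (T p)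
  refine hlim.congr' ?_
  filter_upwards [self_mem_nhdsWithin] with η hη
  rw [integral_dampedConj hl hr hX hη, Finset.smul_sum]
  simp only [smul_smul]

end BanachAlgebra

section RankOne

variable {E : Type*} [NormedAddCommGroup E] [InnerProductSpace ℂ E]

theorem mul_rankOne_of_apply_eq_smul {H : E →L[ℂ] E} {x : E} {c : ℂ} (hx : H x = c • x)
    (y : E) :
    H * rankOne ℂ x y = c • rankOne ℂ x y := by
  ext z
  simp [hx, smul_smul, mul_comm]

theorem rankOne_mul_of_apply_eq_smul {H : E →L[ℂ] E} (hH : (H : E →ₗ[ℂ] E).IsSymmetric)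
    {y : E} {r : ℝ} (hy : H y = (r : ℂ) • y) (x : E) :
    rankOne ℂ x y * H = (r : ℂ) • rankOne ℂ x y := by
  have hinner (z : E) : ⟪y, H z⟫_ℂ = r * ⟪y, z⟫_ℂ := by
    rw [← ContinuousLinearMap.coe_coe H, ← hH y z, ContinuousLinearMap.coe_coe, hy,
      inner_smul_left, conj_ofReal]
  ext z
  simp [hinner, mul_smul]

theorem OrthonormalBasis.sum_inner_smul_rankOne {ι : Type*} [Fintype ι]
    (b : OrthonormalBasis ι ℂ E) (X : E →L[ℂ] E) :
    ∑ p : ι × ι, ⟪b p.1, X (b p.2)⟫_ℂ • rankOne ℂ (b p.1) (b p.2) = X := by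
  calc ∑ p : ι × ι, ⟪b p.1, X (b p.2)⟫_ℂ • rankOne ℂ (b p.1) (b p.2)
      = ∑ j, rankOne ℂ (∑ i, ⟪b i, X (b j)⟫_ℂ • b i) (b j) := by
        simp only [map_sum, map_smul, FunLike.coe_sum, Finset.sum_apply,
          FunLike.coe_smul, Pi.smul_apply]
        rw [Fintype.sum_prod_type, Finset.sum_comm]
    _ = X ∘L ∑ j, rankOne ℂ (b j) (b j) := by
        simp only [b.sum_repr', ContinuousLinearMap.comp_finsetSum, comp_rankOne]
    _ = X := by rw [b.sum_rankOne_eq_id, ContinuousLinearMap.comp_id]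

end RankOne

/-- For Hermitian `H₀` and `B` whose block-diagonal part (with respect to the
eigenspaces of `H₀`) vanishes, the regularized integral
`Y = i lim_{η→0⁺} ∫₀^∞ e^{−ητ} e^{iH₀τ} B e^{−iH₀τ} dτ` converges absolutely for
every `η > 0`, the limit exists, and `[H₀, Y] = −B`. -/
theorem stmt_4 {n : ℕ}
    (H₀ B : EuclideanSpace ℂ (Fin n) →L[ℂ] EuclideanSpace ℂ (Fin n))
    (hH : IsSelfAdjoint H₀)
    (hblock : ∀ (μ : ℂ) (v w : EuclideanSpace ℂ (Fin n)),
      v ∈ Module.End.eigenspace (H₀ : EuclideanSpace ℂ (Fin n) →ₗ[ℂ] EuclideanSpace ℂ (Fin n)) μ →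
      w ∈ Module.End.eigenspace (H₀ : EuclideanSpace ℂ (Fin n) →ₗ[ℂ] EuclideanSpace ℂ (Fin n)) μ →
      ⟪w, B v⟫_ℂ = 0) :
    (∀ η : ℝ, 0 < η →
      Integrable (fun τ : ℝ => Real.exp (-η * τ) •
          (NormedSpace.exp ((Complex.I * (τ : ℂ)) • H₀) * B *
            NormedSpace.exp (-((Complex.I * (τ : ℂ)) • H₀))))
        (volume.restrict (Set.Ioi (0 : ℝ))))
    ∧ ∃ Y : EuclideanSpace ℂ (Fin n) →L[ℂ] EuclideanSpace ℂ (Fin n),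
        Filter.Tendsto (fun η : ℝ => Complex.I •
            ∫ τ in Set.Ioi (0 : ℝ), Real.exp (-η * τ) •
              (NormedSpace.exp ((Complex.I * (τ : ℂ)) • H₀) * B *
                NormedSpace.exp (-((Complex.I * (τ : ℂ)) • H₀))))
          (nhdsWithin 0 (Set.Ioi 0)) (nhds Y)
        ∧ H₀ * Y - Y * H₀ = -B := by
  have hsymm := hH.isSymmetric
  set b := hsymm.eigenvectorBasis finrank_euclideanSpace_fin
  set μ := hsymm.eigenvalues finrank_euclideanSpace_fin
  have hb : ∀ i, H₀ (b i) = (μ i : ℂ) • b i := hsymm.apply_eigenvectorBasis _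
  have hl (p : Fin n × Fin n) :
      H₀ * rankOne ℂ (b p.1) (b p.2) = (μ p.1 : ℂ) • rankOne ℂ (b p.1) (b p.2) :=
    mul_rankOne_of_apply_eq_smul (hb p.1) _
  have hr (p : Fin n × Fin n) :
      rankOne ℂ (b p.1) (b p.2) * H₀ = (μ p.2 : ℂ) • rankOne ℂ (b p.1) (b p.2) :=
    rankOne_mul_of_apply_eq_smul hsymm (hb p.2) _
  have hB := (b.sum_inner_smul_rankOne B).symm
  have hβ (p : Fin n × Fin n) (hμ : μ p.1 = μ p.2) : ⟪b p.1, B (b p.2)⟫_ℂ = 0 :=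
    hblock (μ p.1) (b p.2) (b p.1) (by rw [Module.End.mem_eigenspace_iff, hμ]; exact hb p.2)
      (Module.End.mem_eigenspace_iff.mpr (hb p.1))
  exact ⟨fun η hη => integrableOn_dampedConj hl hr hB hη, _,
    tendsto_I_smul_integral_dampedConj hl hr hB hβ,
    mul_sub_mul_sum_neg_div_smul_eq_neg hl hr hB hβ⟩
end

section
/- Let H be a Hermitian n×n complex matrix with distinct eigenvalues E₁, …, E_k and spectral projections P₁, …, P_k, and let O be any n×n complex matrix. Then the time average (1/T) ∫₀^T e^{iHt} O e^{−iHt} dt converges as T → ∞ to Ō = Σ_{j=1}^k P_j O P_j, and the limit satisfies [H, Ō] = 0. -/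
/-!
Write `H = ∑ⱼ μⱼ Pⱼ`. Self-adjoint projections summing to `1` in a C⋆-algebra are automatically
orthogonal, so `e^{itH} = ∑ⱼ e^{iμⱼt} Pⱼ` and
`e^{itH} O e^{-itH} = ∑ⱼₗ e^{i(μⱼ-μₗ)t} Pⱼ O Pₗ`
is a trigonometric polynomial in `t`. Its time average keeps exactly the terms of frequency zero,
which by distinctness of the `μⱼ` are the diagonal ones. Finally every `Pⱼ` commutes with
`∑ₗ Pₗ O Pₗ`, hence so does `H`.
-/

open Filter Topology Complex

theorem CompleteOrthogonalIdempotents.of_isStarProjection {A ι : Type*} [NormedRing A]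
    [StarRing A] [CStarRing A] [PartialOrder A] [StarOrderedRing A] [Fintype ι] {p : ι → A}
    (hp : ∀ i, IsStarProjection (p i)) (hsum : ∑ i, p i = 1) :
    CompleteOrthogonalIdempotents p := by
  classical
  refine ⟨⟨fun i => (hp i).isIdempotentElem, fun i j hij => ?_⟩, hsum⟩
  set q : ι → A := fun l => star (p l * p j) * (p l * p j)
  have hq (l : ι) : q l = p j * p l * p j := by
    simp only [q]
    rw [star_mul, (hp l).isSelfAdjoint.star_eq, (hp j).isSelfAdjoint.star_eq, mul_assoc,
      ← mul_assoc (p l), (hp l).isIdempotentElem.eq, ← mul_assoc]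
  have hqj : q j = p j := by rw [hq, (hp j).isIdempotentElem.eq, (hp j).isIdempotentElem.eq]
  have hq_sum : ∑ l, q l = p j := by
    simp only [hq, ← Finset.sum_mul, ← Finset.mul_sum, hsum, mul_one, (hp j).isIdempotentElem.eq]
  -- `∑ l, q l = p j * 1 * p j = q j`, so the other terms, all nonnegative, vanish.
  have hrest : ∑ l ∈ Finset.univ.erase j, q l = 0 := by
    have := Finset.add_sum_erase _ q (Finset.mem_univ j)
    rwa [hq_sum, hqj, add_eq_left] at this
  rw [Finset.sum_eq_zero_iff_of_nonneg fun l _ => star_mul_self_nonneg _] at hrest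
  exact (CStarRing.star_mul_self_eq_zero_iff _).mp
    (hrest i (Finset.mem_erase.mpr ⟨hij, Finset.mem_univ i⟩))

theorem OrthogonalIdempotents.commute_sum_mul_mul_self {R ι : Type*} [Semiring R] [Fintype ι]
    {e : ι → R} (he : OrthogonalIdempotents e) (x : R) (i : ι) :
    Commute (e i) (∑ j, e j * x * e j) := by
  classical
  calc e i * ∑ j, e j * x * e j = ∑ j, e i * e j * x * e j := by
        simp only [Finset.mul_sum, mul_assoc]
    _ = e i * x * e i := by simp [he.mul_eq]
    _ = ∑ j, e j * x * (e j * e i) := by simp [he.mul_eq]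
    _ = (∑ j, e j * x * e j) * e i := by simp only [Finset.sum_mul, mul_assoc]

namespace CompleteOrthogonalIdempotents

variable {ι : Type*} [Fintype ι]

noncomputable def linearCombinationAlgHom (R : Type*) {A : Type*} [CommSemiring R] [Semiring A]
    [Algebra R A] {e : ι → A} (he : CompleteOrthogonalIdempotents e) : (ι → R) →ₐ[R] A :=
  AlgHom.ofLinearMap (Fintype.linearCombination R e)
    (by simp [Fintype.linearCombination_apply, he.complete])
    fun f g => by
      classical
      simp only [Fintype.linearCombination_apply, Pi.mul_apply, Finset.sum_mul_sum,
        smul_mul_smul_comm, he.mul_eq, smul_ite, smul_zero, Finset.sum_ite_eq]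
      simp [mul_smul]

theorem exp_sum_smul {𝕜 A : Type*} [RCLike 𝕜] [NormedRing A] [NormedAlgebra 𝕜 A]
    [CompleteSpace A] {e : ι → A} (he : CompleteOrthogonalIdempotents e) (c : ι → 𝕜) :
    NormedSpace.exp (∑ i, c i • e i) = ∑ i, NormedSpace.exp (c i) • e i := by
  -- `map_exp` needs some `ℚ`-algebra structure on `A`; `NormedSpace.exp` does not depend on it.
  let : Algebra ℚ A := Algebra.compHom A (algebraMap ℚ 𝕜)
  have h := NormedSpace.map_exp (he.linearCombinationAlgHom 𝕜)
    (LinearMap.continuous_of_finiteDimensional (Fintype.linearCombination 𝕜 e)) c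
  simpa [linearCombinationAlgHom, Fintype.linearCombination_apply, Pi.exp_def] using h.symm

theorem exp_smul_mul_mul_exp_neg_smul {A : Type*} [NormedRing A] [NormedAlgebra ℂ A]
    [CompleteSpace A] {e : ι → A} (he : CompleteOrthogonalIdempotents e) (μ : ι → ℝ) (x : A)
    (t : ℝ) :
    NormedSpace.exp ((I * t) • ∑ i, (μ i : ℂ) • e i) * x *
        NormedSpace.exp (-((I * t) • ∑ i, (μ i : ℂ) • e i)) =
      ∑ p : ι × ι, exp (I * ↑(μ p.1 - μ p.2) * t) • (e p.1 * x * e p.2) := by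
  rw [← neg_smul, Finset.smul_sum, Finset.smul_sum]
  simp only [smul_smul]
  rw [he.exp_sum_smul, he.exp_sum_smul, Finset.sum_mul, Finset.sum_mul_sum,
    ← Fintype.sum_prod_type']
  refine Finset.sum_congr rfl fun p _ => ?_
  rw [smul_mul_assoc, smul_mul_assoc, mul_smul_comm, smul_smul, ← exp_eq_exp_ℂ, ← exp_add]
  congr 2
  push_cast
  ring

end CompleteOrthogonalIdempotents

theorem tendsto_average_integral_exp_I_mul (ω : ℝ) :
    Tendsto (fun T : ℝ => (T⁻¹ : ℝ) • ∫ t in (0 : ℝ)..T, exp (I * ω * t)) atTop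
      (𝓝 (if ω = 0 then 1 else 0)) := by
  split_ifs with hω
  · subst hω
    refine tendsto_const_nhds.congr' ?_
    filter_upwards [eventually_ne_atTop 0] with T hT
    simp [hT]
  · have hc : I * ω ≠ 0 := mul_ne_zero I_ne_zero (ofReal_ne_zero.mpr hω)
    have hunit (T : ℝ) : ‖exp (I * ω * T)‖ = 1 := by
      rw [mul_assoc, ← ofReal_mul, norm_exp_I_mul_ofReal]
    refine squeeze_zero_norm' ?_ (by simpa using tendsto_inv_atTop_zero.const_mul (2 / |ω|))
    filter_upwards [eventually_gt_atTop 0] with T hT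
    rw [integral_exp_mul_complex hc, norm_smul, norm_div,
      Real.norm_of_nonneg (inv_nonneg.mpr hT.le), mul_comm, show ‖I * ω‖ = |ω| by simp]
    gcongr
    exact (norm_sub_le _ _).trans (by rw [hunit, hunit]; norm_num)

theorem tendsto_average_integral_sum_exp_I_mul_smul {E ι : Type*} [NormedAddCommGroup E]
    [NormedSpace ℂ E] [CompleteSpace E] [Fintype ι] (ω : ι → ℝ) (B : ι → E) :
    Tendsto (fun T : ℝ => (T⁻¹ : ℝ) • ∫ t in (0 : ℝ)..T, ∑ i, exp (I * ω i * t) • B i) atTop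
      (𝓝 (∑ i, if ω i = 0 then B i else 0)) := by
  have hint (T : ℝ) : ∫ t in (0 : ℝ)..T, ∑ i, exp (I * ω i * t) • B i =
      ∑ i, (∫ t in (0 : ℝ)..T, exp (I * ω i * t)) • B i := by
    rw [intervalIntegral.integral_finsetSum fun i _ =>
      (by fun_prop : Continuous _).intervalIntegrable _ _]
    exact Finset.sum_congr rfl fun i _ => intervalIntegral.integral_smul_const _ _
  simp only [hint, Finset.smul_sum, ← smul_assoc]
  refine tendsto_finsetSum _ fun i _ => ?_
  convert (tendsto_average_integral_exp_I_mul (ω i)).smul_const (B i) using 2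
  split_ifs <;> simp

/-- For a Hermitian `H = Σ_j μ_j P_j` with distinct eigenvalues `μ_j` and spectral
projections `P_j`, the time average `(1/T)∫₀^T e^{iHt} O e^{−iHt} dt` converges as
`T → ∞` to `Ō = Σ_j P_j O P_j`, which commutes with `H`. -/
theorem stmt_8 {n k : ℕ}
    (H O : EuclideanSpace ℂ (Fin n) →L[ℂ] EuclideanSpace ℂ (Fin n))
    (μ : Fin k → ℝ) (hμ : Function.Injective μ)
    (P : Fin k → (EuclideanSpace ℂ (Fin n) →L[ℂ] EuclideanSpace ℂ (Fin n)))
    (hPsa : ∀ j, IsSelfAdjoint (P j))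
    (hPidem : ∀ j, P j * P j = P j)
    (hPsum : ∑ j, P j = 1)
    (hH : H = ∑ j, (μ j : ℂ) • P j) :
    Filter.Tendsto (fun T : ℝ => (T⁻¹ : ℝ) •
        ∫ t in (0 : ℝ)..T,
          NormedSpace.exp ((Complex.I * (t : ℂ)) • H) * O *
            NormedSpace.exp (-((Complex.I * (t : ℂ)) • H)))
      Filter.atTop (nhds (∑ j, P j * O * P j))
    ∧ H * (∑ j, P j * O * P j) - (∑ j, P j * O * P j) * H = 0 := by
  have hP : CompleteOrthogonalIdempotents P :=
    .of_isStarProjection (fun j => ⟨hPidem j, hPsa j⟩) hPsum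
  subst hH
  constructor
  · have hdiag : ∑ j, P j * O * P j =
        ∑ p : Fin k × Fin k, if μ p.1 - μ p.2 = 0 then P p.1 * O * P p.2 else 0 := by
      simp [Fintype.sum_prod_type, sub_eq_zero, hμ.eq_iff]
    simp only [hP.exp_smul_mul_mul_exp_neg_smul, hdiag]
    exact tendsto_average_integral_sum_exp_I_mul_smul _ _
  · rw [sub_eq_zero]
    exact Commute.sum_left _ _ _ fun j _ => (hP.commute_sum_mul_mul_self O j).smul_left _
end
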